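/- For α ∈ (0,1) and λ ≥ 0, the unique continuous solution u : [0,∞) → ℝ of the fractional integral equation u(t) = u₀ - λ J^α u(t) with u(0) = u₀ satisfies: if u₀ ≥ 0 then 0 ≤ u(t) ≤ u₀ for all t ≥ 0. (Special case λ = 0: u ≡ u₀.) -/

import Mathlib

/-!
If `u` dropped below zero, let `p` be the first time it attains its (negative) minimum `m`
on `[0, t]`. Comparing the equation at `p` and at a time `s` just before `p`, the history on
`(0, s]` only pushes `u s - m` down, because the kernel `(t - r) ^ (α - 1)` decreases in `t`
and `m ≤ 0`; what remains is controlled by `λ h ^ α / Γ(α + 1)` times the oscillation of `u`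
on the window `[p - h, p]`. For small `h` this forces the oscillation to vanish, so `u = m`
already at `p - h`, contradicting the choice of `p`. The upper bound is then immediate,
since the integral term is nonnegative.
-/

open MeasureTheory Real Set Filter Topology

noncomputable def fracIntegral (α : ℝ) (f : ℝ → ℝ) (t : ℝ) : ℝ :=
  ∫ s in Ioc 0 t, (t - s) ^ (α - 1) / Gamma α * f s

theorem exists_isMinOn_forall_lt {f : ℝ → ℝ} {a b : ℝ} (hab : a ≤ b)
    (hf : ContinuousOn f (Icc a b)) :
    ∃ p ∈ Icc a b, IsMinOn f (Icc a b) p ∧ ∀ r ∈ Ico a p, f p < f r := by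
  obtain ⟨c, hc, hcmin⟩ := isCompact_Icc.exists_isMinOn (nonempty_Icc.2 hab) hf
  set S := Icc a b ∩ f ⁻¹' Iic (f c)
  have hSbdd : BddBelow S := ⟨a, fun x hx => hx.1.1⟩
  have hpS : sInf S ∈ S :=
    (hf.preimage_isClosed_of_isClosed isClosed_Icc isClosed_Iic).csInf_mem
      ⟨c, hc, show f c ≤ f c from le_rfl⟩ hSbdd
  refine ⟨sInf S, hpS.1, isMinOn_iff.2 fun x hx => hpS.2.trans (hcmin hx), fun r hr => ?_⟩
  by_contra! hle
  have hrS : r ∈ S := ⟨⟨hr.1, hr.2.le.trans hpS.1.2⟩, show f r ≤ f c from hle.trans hpS.2⟩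
  exact (csInf_le hSbdd hrS).not_gt hr.2

section FracKernel

variable {α : ℝ}

theorem fracKernel_nonneg (hα : 0 < α) {t r : ℝ} (hr : r ≤ t) :
    0 ≤ (t - r) ^ (α - 1) / Gamma α :=
  div_nonneg (rpow_nonneg (sub_nonneg.2 hr) _) (Gamma_pos_of_pos hα).le

theorem fracKernel_le_fracKernel (hα : α ∈ Ioo 0 1) {r s t : ℝ} (hrs : r < s) (hst : s ≤ t) :
    (t - r) ^ (α - 1) / Gamma α ≤ (s - r) ^ (α - 1) / Gamma α :=
  div_le_div_of_nonneg_right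
    (rpow_le_rpow_of_nonpos (sub_pos.2 hrs) (by linarith) (by linarith [hα.2]))
    (Gamma_pos_of_pos hα.1).le

theorem integrableOn_fracKernel (hα : 0 < α) (t : ℝ) {a b : ℝ} (hab : a ≤ b) :
    IntegrableOn (fun r => (t - r) ^ (α - 1) / Gamma α) (Ioc a b) := by
  have h := (intervalIntegral.intervalIntegrable_rpow' (a := t - a) (b := t - b)
    (r := α - 1) (by linarith)).comp_sub_left t
  simp only [sub_sub_cancel] at h
  exact ((intervalIntegrable_iff_integrableOn_Ioc_of_le hab).1 h).div_const _

theorem integrableOn_fracKernel_mul (hα : 0 < α) (t : ℝ) {f : ℝ → ℝ} {a b : ℝ} (hab : a ≤ b)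
    (hf : ContinuousOn f (Icc a b)) :
    IntegrableOn (fun r => (t - r) ^ (α - 1) / Gamma α * f r) (Ioc a b) :=
  (integrableOn_fracKernel hα t hab).mul_continuousOn_of_subset hf measurableSet_Ioc
    isCompact_Icc Ioc_subset_Icc_self

theorem integral_fracKernel (hα : 0 < α) (t : ℝ) {a b : ℝ} (hab : a ≤ b) :
    ∫ r in Ioc a b, (t - r) ^ (α - 1) / Gamma α
      = ((t - a) ^ α - (t - b) ^ α) / Gamma (α + 1) := by
  rw [integral_div, ← intervalIntegral.integral_of_le hab,
    intervalIntegral.integral_comp_sub_left (fun x => x ^ (α - 1)) t,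
    integral_rpow (Or.inl (by linarith)), sub_add_cancel, Gamma_add_one hα.ne']
  field_simp

theorem fracIntegral_nonneg (hα : 0 < α) {f : ℝ → ℝ} {t : ℝ}
    (hf : ∀ r ∈ Ioc 0 t, 0 ≤ f r) : 0 ≤ fracIntegral α f t :=
  setIntegral_nonneg measurableSet_Ioc fun r hr =>
    mul_nonneg (fracKernel_nonneg hα hr.2) (hf r hr)

theorem integral_fracKernel_sub_mul_le (hα : α ∈ Ioo 0 1) {f : ℝ → ℝ} {s p m : ℝ}
    (hs : 0 ≤ s) (hsp : s ≤ p) (hf : ContinuousOn f (Icc 0 s)) (hm : ∀ r ∈ Icc 0 s, m ≤ f r) :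
    ∫ r in Ioc 0 s, ((p - r) ^ (α - 1) / Gamma α - (s - r) ^ (α - 1) / Gamma α) * f r
      ≤ m * ((p ^ α - (p - s) ^ α - s ^ α) / Gamma (α + 1)) := by
  have hK := (integrableOn_fracKernel hα.1 p hs).sub (integrableOn_fracKernel hα.1 s hs)
  have hKf := hK.mul_continuousOn_of_subset hf measurableSet_Ioc isCompact_Icc
    Ioc_subset_Icc_self
  -- on `Ioo` rather than `Ioc`: at `r = s` the junk value `0 ^ (α - 1) = 0` breaks monotonicity
  have hmono : ∫ r in Ioo 0 s, ((p - r) ^ (α - 1) / Gamma α - (s - r) ^ (α - 1) / Gamma α) * f r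
      ≤ ∫ r in Ioo 0 s, ((p - r) ^ (α - 1) / Gamma α - (s - r) ^ (α - 1) / Gamma α) * m := by
    refine setIntegral_mono_on (hKf.mono_set Ioo_subset_Ioc_self)
      (IntegrableOn.mono_set (hK.mul_const m) Ioo_subset_Ioc_self) measurableSet_Ioo
      fun r hr => ?_
    exact mul_le_mul_of_nonpos_left (hm r (Ioo_subset_Icc_self hr))
      (sub_nonpos.2 (fracKernel_le_fracKernel hα hr.2 hsp))
  rw [← integral_Ioc_eq_integral_Ioo, ← integral_Ioc_eq_integral_Ioo, integral_mul_const,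
    integral_sub (integrableOn_fracKernel hα.1 p hs) (integrableOn_fracKernel hα.1 s hs),
    integral_fracKernel hα.1 p hs, integral_fracKernel hα.1 s hs, sub_zero, sub_zero, sub_self,
    zero_rpow hα.1.ne', sub_zero] at hmono
  exact hmono.trans_eq (by ring)

theorem integral_fracKernel_mul_le (hα : 0 < α) {f : ℝ → ℝ} {a p M : ℝ} (hap : a ≤ p)
    (hf : ContinuousOn f (Icc a p)) (hM : ∀ r ∈ Icc a p, f r ≤ M) :
    ∫ r in Ioc a p, (p - r) ^ (α - 1) / Gamma α * f r ≤ M * ((p - a) ^ α / Gamma (α + 1)) := by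
  have hmono : ∫ r in Ioc a p, (p - r) ^ (α - 1) / Gamma α * f r
      ≤ ∫ r in Ioc a p, (p - r) ^ (α - 1) / Gamma α * M :=
    setIntegral_mono_on (integrableOn_fracKernel_mul hα p hap hf)
      ((integrableOn_fracKernel hα p hap).mul_const M) measurableSet_Ioc fun r hr =>
        mul_le_mul_of_nonneg_left (hM r (Ioc_subset_Icc_self hr)) (fracKernel_nonneg hα hr.2)
  rwa [integral_mul_const, integral_fracKernel hα p hap, sub_self, zero_rpow hα.ne', sub_zero,
    mul_comm] at hmono

theorem fracIntegral_sub_le (hα : α ∈ Ioo 0 1) {f : ℝ → ℝ} {s p m M : ℝ} (hs : 0 ≤ s)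
    (hsp : s ≤ p) (hf : ContinuousOn f (Icc 0 p)) (hm : ∀ r ∈ Icc 0 p, m ≤ f r)
    (hM : ∀ r ∈ Icc s p, f r ≤ M) :
    fracIntegral α f p - fracIntegral α f s
      ≤ (m * (p ^ α - s ^ α) + (M - m) * (p - s) ^ α) / Gamma (α + 1) := by
  have hfs : ContinuousOn f (Icc 0 s) := hf.mono (Icc_subset_Icc_right hsp)
  have hsplit : fracIntegral α f p
      = (∫ r in Ioc 0 s, (p - r) ^ (α - 1) / Gamma α * f r)
        + ∫ r in Ioc s p, (p - r) ^ (α - 1) / Gamma α * f r := by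
    rw [fracIntegral, ← Ioc_union_Ioc_eq_Ioc hs hsp, setIntegral_union
      (Ioc_disjoint_Ioc_of_le le_rfl) measurableSet_Ioc
      (integrableOn_fracKernel_mul hα.1 p hs hfs)
      (integrableOn_fracKernel_mul hα.1 p hsp (hf.mono (Icc_subset_Icc_left hs)))]
  have hearly := integral_fracKernel_sub_mul_le hα hs hsp hfs
    (fun r hr => hm r (Icc_subset_Icc_right hsp hr))
  have hlate := integral_fracKernel_mul_le hα.1 hsp (hf.mono (Icc_subset_Icc_left hs)) hM
  simp only [sub_mul] at hearly
  rw [integral_sub (integrableOn_fracKernel_mul hα.1 p hs hfs)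
    (integrableOn_fracKernel_mul hα.1 s hs hfs)] at hearly
  have hrhs : m * ((p ^ α - (p - s) ^ α - s ^ α) / Gamma (α + 1))
        + M * ((p - s) ^ α / Gamma (α + 1))
      = (m * (p ^ α - s ^ α) + (M - m) * (p - s) ^ α) / Gamma (α + 1) := by ring
  rw [hsplit, fracIntegral]
  linarith

end FracKernel

theorem exists_mem_Ioo_mul_rpow_le {α : ℝ} (hα : 0 < α) (c : ℝ) {p ε : ℝ} (hp : 0 < p)
    (hε : 0 < ε) : ∃ h ∈ Ioo 0 p, c * h ^ α ≤ ε := by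
  have hlim : Tendsto (fun h : ℝ => c * h ^ α) (𝓝 0) (𝓝 0) := by
    simpa [zero_rpow hα.ne'] using
      ((continuousAt_id.rpow_const (x := 0) (Or.inr hα.le)).const_mul c).tendsto
  exact (Filter.Eventually.and (Ioo_mem_nhdsGT hp)
    (nhdsWithin_le_nhds (hlim.eventually (ge_mem_nhds hε)))).exists

section Equation

variable {α lam u₀ : ℝ} {u : ℝ → ℝ}

theorem exists_lt_le_of_isMinOn (hα : α ∈ Ioo 0 1) (hlam : 0 ≤ lam) {p : ℝ}
    (hu : ContinuousOn u (Icc 0 p))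
    (heq : ∀ t ∈ Icc 0 p, u t = u₀ - lam * fracIntegral α u t) (hp : 0 < p)
    (hmin : IsMinOn u (Icc 0 p) p) (hneg : u p ≤ 0) : ∃ r ∈ Ico 0 p, u r ≤ u p := by
  have hG : 0 < Gamma (α + 1) := Gamma_pos_of_pos (by linarith [hα.1])
  obtain ⟨h, ⟨hh0, hhp⟩, hsmall⟩ :=
    exists_mem_Ioo_mul_rpow_le hα.1 (lam / Gamma (α + 1)) hp one_half_pos
  have hwin : Icc (p - h) p ⊆ Icc 0 p := Icc_subset_Icc_left (by linarith)
  obtain ⟨s, hs, hsmax⟩ :=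
    isCompact_Icc.exists_isMaxOn (nonempty_Icc.2 (by linarith)) (hu.mono hwin)
  have hmin' := isMinOn_iff.1 hmin
  have hmax' := isMaxOn_iff.1 hsmax
  have hosc : 0 ≤ u s - u p := sub_nonneg.2 (hmin' s (hwin hs))
  have hJ : fracIntegral α u p - fracIntegral α u s ≤ (u s - u p) * h ^ α / Gamma (α + 1) := by
    refine (fracIntegral_sub_le hα (hwin hs).1 hs.2 hu hmin'
      fun r hr => hmax' r ⟨hs.1.trans hr.1, hr.2⟩).trans
      (div_le_div_of_nonneg_right ?_ hG.le)
    have hpast : u p * (p ^ α - s ^ α) ≤ 0 := mul_nonpos_of_nonpos_of_nonneg hneg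
      (sub_nonneg.2 (rpow_le_rpow (hwin hs).1 hs.2 hα.1.le))
    have hwidth : (p - s) ^ α ≤ h ^ α :=
      rpow_le_rpow (by linarith [hs.2]) (by linarith [hs.1]) hα.1.le
    nlinarith [mul_le_mul_of_nonneg_left hwidth hosc]
  have hcontract : u s - u p ≤ (u s - u p) / 2 :=
    calc u s - u p = lam * (fracIntegral α u p - fracIntegral α u s) := by
          rw [heq s (hwin hs), heq p ⟨hp.le, le_rfl⟩]; ring
      _ ≤ lam * ((u s - u p) * h ^ α / Gamma (α + 1)) := mul_le_mul_of_nonneg_left hJ hlam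
      _ = (u s - u p) * (lam / Gamma (α + 1) * h ^ α) := by ring
      _ ≤ (u s - u p) * (1 / 2) := mul_le_mul_of_nonneg_left hsmall hosc
      _ = (u s - u p) / 2 := by ring
  exact ⟨p - h, ⟨by linarith, by linarith⟩,
    (hmax' (p - h) ⟨le_rfl, by linarith⟩).trans (by linarith)⟩

theorem nonneg_of_eq_sub_fracIntegral (hα : α ∈ Ioo 0 1) (hlam : 0 ≤ lam)
    (hu : ContinuousOn u (Ici 0)) (heq : ∀ t, 0 ≤ t → u t = u₀ - lam * fracIntegral α u t)
    (h0 : 0 ≤ u 0) {t : ℝ} (ht : 0 ≤ t) : 0 ≤ u t := by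
  by_contra! hneg
  obtain ⟨p, hp, hpmin, hfirst⟩ := exists_isMinOn_forall_lt ht (hu.mono Icc_subset_Ici_self)
  have hup : u p < 0 := (isMinOn_iff.1 hpmin t ⟨ht, le_rfl⟩).trans_lt hneg
  have hp0 : 0 < p := hp.1.lt_of_ne (by rintro rfl; linarith)
  obtain ⟨r, hr, hle⟩ := exists_lt_le_of_isMinOn hα hlam (hu.mono Icc_subset_Ici_self)
    (fun s hs => heq s hs.1) hp0 (hpmin.on_subset (Icc_subset_Icc_right hp.2)) hup.le
  exact (hfirst r hr).not_ge hle

end Equation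

theorem fractional_ode_bounds
    (α lam u₀ : ℝ) (hα : α ∈ Ioo (0:ℝ) 1) (hlam : 0 ≤ lam)
    (u : ℝ → ℝ) (hu : ContinuousOn u (Ici 0)) (hu0 : u 0 = u₀)
    (heq : ∀ t : ℝ, 0 ≤ t →
      u t = u₀ - lam * ∫ s in Ioc 0 t, (t - s) ^ (α - 1) / Real.Gamma α * u s)
    (hpos : 0 ≤ u₀) :
    ∀ t : ℝ, 0 ≤ t → 0 ≤ u t ∧ u t ≤ u₀ := by
  have heq' : ∀ t, 0 ≤ t → u t = u₀ - lam * fracIntegral α u t := heq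
  have hnonneg : ∀ t, 0 ≤ t → 0 ≤ u t :=
    fun t => nonneg_of_eq_sub_fracIntegral hα hlam hu heq' (hu0 ▸ hpos)
  intro t ht
  have hJ : 0 ≤ fracIntegral α u t := fracIntegral_nonneg hα.1 fun r hr => hnonneg r hr.1.le
  refine ⟨hnonneg t ht, ?_⟩
  rw [heq' t ht]
  linarith [mul_nonneg hlam hJ]
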